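/- arXiv:1501.02901 — 2 statements merged into one kernel-verified Lean document; each statement's English description precedes it below -/
import Mathlib

section
/- Let 0 < α < ω₁, X a topological space and Y a topological space with a σ-disjoint base. If f : X → Y is of the α'th functionally Lebesgue class (preimages of open sets are of the α'th functionally additive class) and f has a σ-sfd base, then f has a σ-sfd base consisting of functionally ambiguous sets of class α. -/
open Set Topology Ordinal

/-- A family of sets is discrete if every point has an open neighborhood
meeting at most one member of the family. -/
def DiscreteFam {X I : Type*} [TopologicalSpace X] (U : I → Set X) : Prop :=
  ∀ x : X, ∃ V : Set X, IsOpen V ∧ x ∈ V ∧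
    ∀ i j : I, (V ∩ U i).Nonempty → (V ∩ U j).Nonempty → i = j

/-- A set is functionally closed (a zero set) if it is the preimage of `{0}`
under a continuous real-valued function. -/
def FunClosed {X : Type*} [TopologicalSpace X] (F : Set X) : Prop :=
  ∃ f : X → ℝ, Continuous f ∧ F = f ⁻¹' {0}

/-- A set is functionally open if its complement is functionally closed. -/
def FunOpen {X : Type*} [TopologicalSpace X] (U : Set X) : Prop :=
  FunClosed Uᶜ

/-- The pair (α'th functionally multiplicative class, α'th functionally additive class),
defined by transfinite recursion. -/
noncomputable def FunClassPair (X : Type*) [TopologicalSpace X] (α : Ordinal) :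
    Set (Set X) × Set (Set X) :=
  if α = 0 then ({F | FunClosed F}, {U | FunOpen U})
  else
    ({ A | ∃ f : ℕ → Set X, (∀ n, ∃ β, ∃ _ : β < α, f n ∈ (FunClassPair X β).2) ∧ A = ⋂ n, f n },
     { A | ∃ f : ℕ → Set X, (∀ n, ∃ β, ∃ _ : β < α, f n ∈ (FunClassPair X β).1) ∧ A = ⋃ n, f n })
termination_by α

/-- The α'th functionally multiplicative class. -/
noncomputable def FunMul (X : Type*) [TopologicalSpace X] (α : Ordinal) : Set (Set X) :=
  (FunClassPair X α).1

/-- The α'th functionally additive class. -/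
noncomputable def FunAdd (X : Type*) [TopologicalSpace X] (α : Ordinal) : Set (Set X) :=
  (FunClassPair X α).2

/-- Functionally ambiguous sets of class α. -/
noncomputable def FunAmb {X : Type*} [TopologicalSpace X] (α : Ordinal) (A : Set X) : Prop :=
  A ∈ FunAdd X α ∧ A ∈ FunMul X α

/-- A family is strongly functionally discrete (sfd). -/
def SFDFam {X I : Type*} [TopologicalSpace X] (A : I → Set X) : Prop :=
  ∃ U : I → Set X, DiscreteFam U ∧ (∀ i, FunOpen (U i)) ∧ ∀ i, closure (A i) ⊆ U i

/-- A collection of sets is sfd (viewed as a family indexed by itself). -/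
def SFDSet {X : Type*} [TopologicalSpace X] (𝒜 : Set (Set X)) : Prop :=
  SFDFam (fun b : 𝒜 => (b : Set X))

/-- A collection of sets is a well sfd-family. -/
def WellSFDSet {X : Type*} [TopologicalSpace X] (𝒜 : Set (Set X)) : Prop :=
  ∃ U F : 𝒜 → Set X, DiscreteFam U ∧ DiscreteFam F ∧
    (∀ b, FunOpen (U b)) ∧ (∀ b, FunClosed (F b)) ∧
    ∀ b : 𝒜, (b : Set X) ⊆ F b ∧ F b ⊆ U b

/-- An indexed family is σ-sfd if the index set splits into countably many pieces
on each of which the family is sfd. -/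
def SigmaSFDFam {X I : Type*} [TopologicalSpace X] (A : I → Set X) : Prop :=
  ∃ J : ℕ → Set I, (∀ n, SFDFam (fun i : J n => A i)) ∧ (⋃ n, J n) = Set.univ

/-- `B` is a base for the mapping `f`: every preimage of an open set is a union
of members of `B`. -/
def IsBaseFor {X Y : Type*} [TopologicalSpace X] [TopologicalSpace Y]
    (B : Set (Set X)) (f : X → Y) : Prop :=
  ∀ V : Set Y, IsOpen V → ∃ S ⊆ B, f ⁻¹' V = ⋃₀ S

/-- `f` has a σ-strongly-functionally-discrete base. -/
def SigmaSFD {X Y : Type*} [TopologicalSpace X] [TopologicalSpace Y] (f : X → Y) : Prop :=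
  ∃ B : ℕ → Set (Set X), (∀ n, SFDSet (B n)) ∧ IsBaseFor (⋃ n, B n) f

/-- `f` has a σ-sfd base consisting of functionally ambiguous sets of class α. -/
noncomputable def SigmaSFDAmb {X Y : Type*} [TopologicalSpace X] [TopologicalSpace Y]
    (α : Ordinal) (f : X → Y) : Prop :=
  ∃ B : ℕ → Set (Set X), (∀ n, SFDSet (B n)) ∧ (∀ n, ∀ b ∈ B n, FunAmb α b) ∧
    IsBaseFor (⋃ n, B n) f

/-- `f` belongs to the α'th functionally Lebesgue class. -/
noncomputable def LebClass {X Y : Type*} [TopologicalSpace X] [TopologicalSpace Y]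
    (α : Ordinal) (f : X → Y) : Prop :=
  ∀ V : Set Y, IsOpen V → f ⁻¹' V ∈ FunAdd X α

/-- `Y` has a σ-disjoint base. -/
def SigmaDisjointBase (Y : Type*) [TopologicalSpace Y] : Prop :=
  ∃ V : ℕ → Set (Set Y), (∀ m, (V m).PairwiseDisjoint id) ∧
    TopologicalSpace.IsTopologicalBasis (⋃ m, V m)


/-!
Let `⋃ₙ ℬₙ` be a σ-sfd base for `f`, witnessed by discrete functionally open `Uₙ b ⊇ closure b`,
and write `Uₙ b = ⋃ₖ Kₙₖ b` with `Kₙₖ b` functionally closed. Let `⋃ₘ 𝒱ₘ` be a σ-disjoint base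
of `Y` and write `f⁻¹ V = ⋃ⱼ G V j` with `G V j` of multiplicative class `< α`. For `V ∈ 𝒱ₘ`,
the union `Φₙₖ V` of those `Kₙₖ b` with `∅ ≠ b ∩ Kₙₖ b ⊆ f⁻¹ V` is functionally closed, being a
discrete union of functionally closed sets. As the members of `𝒱ₘ` are disjoint, each `b` takes
part in at most one `Φₙₖ V`, so `V ↦ Φₙₖ V` is sfd. Hence, for each `(n, k, m, j)`, the sets
`Φₙₖ V ∩ G V j` with `V ∈ 𝒱ₘ` form an sfd family of functionally ambiguous sets of class `α`,
and all of them together form a base for `f`.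
-/

open Function

section FunctionallyClosed

variable {X : Type*} [TopologicalSpace X]

lemma funClosed_setOf_le {g h : X → ℝ} (hg : Continuous g) (hh : Continuous h) :
    FunClosed {x | g x ≤ h x} :=
  ⟨fun x => max (g x - h x) 0, by fun_prop, by ext x; simp⟩

lemma funOpen_setOf_lt {g h : X → ℝ} (hg : Continuous g) (hh : Continuous h) :
    FunOpen {x | g x < h x} := by
  simpa only [FunOpen, compl_ofPred, not_lt] using funClosed_setOf_le hh hg

lemma FunClosed.isClosed {F : Set X} (hF : FunClosed F) : IsClosed F := by
  obtain ⟨g, hg, rfl⟩ := hF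
  exact isClosed_singleton.preimage hg

lemma FunClosed.inter {F G : Set X} (hF : FunClosed F) (hG : FunClosed G) :
    FunClosed (F ∩ G) := by
  obtain ⟨g, hg, rfl⟩ := hF
  obtain ⟨h, hh, rfl⟩ := hG
  refine ⟨fun x => |g x| + |h x|, by fun_prop, ?_⟩
  ext x
  simp [add_eq_zero_iff_of_nonneg (abs_nonneg (g x)) (abs_nonneg (h x))]

lemma FunOpen.exists_support_eq {U : Set X} (hU : FunOpen U) :
    ∃ g : X → ℝ, Continuous g ∧ support g = U := by
  obtain ⟨g, hg, hgU⟩ := hU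
  refine ⟨g, hg, ?_⟩
  rw [← compl_compl U, hgU]
  rfl

lemma FunClosed.eq_iInter_funOpen {F : Set X} (hF : FunClosed F) :
    ∃ W : ℕ → Set X, (∀ n, FunOpen (W n)) ∧ F = ⋂ n, W n := by
  obtain ⟨g, hg, rfl⟩ := hF
  refine ⟨fun n => {x | |g x| < 1 / (n + 1)}, fun n => funOpen_setOf_lt hg.abs continuous_const,
    ?_⟩
  ext x
  simp only [mem_preimage, mem_singleton_iff, mem_iInter, mem_ofPred_eq]
  refine ⟨fun hx n => by simp [hx, Nat.cast_add_one_pos], fun hx => ?_⟩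
  by_contra hne
  obtain ⟨n, hn⟩ := exists_nat_one_div_lt (abs_pos.2 hne)
  exact (hx n).not_gt hn

lemma FunOpen.eq_iUnion_funClosed {U : Set X} (hU : FunOpen U) :
    ∃ K : ℕ → Set X, (∀ n, FunClosed (K n)) ∧ U = ⋃ n, K n := by
  obtain ⟨g, hg, rfl⟩ := hU.exists_support_eq
  refine ⟨fun n => {x | 1 / (n + 1) ≤ |g x|}, fun n => funClosed_setOf_le continuous_const hg.abs,
    ?_⟩
  ext x
  simp only [mem_support, mem_iUnion, mem_ofPred_eq]
  refine ⟨fun hx => ?_, fun ⟨n, hn⟩ hx => ?_⟩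
  · obtain ⟨n, hn⟩ := exists_nat_one_div_lt (abs_pos.2 hx)
    exact ⟨n, hn.le⟩
  · simp only [hx, abs_zero] at hn
    exact hn.not_gt Nat.one_div_pos_of_nat

lemma FunClosed.exists_continuous_eq_one_iff {K U : Set X} (hK : FunClosed K) (hU : FunOpen U)
    (hKU : K ⊆ U) :
    ∃ φ : X → ℝ, Continuous φ ∧ (∀ x, φ x = 1 ↔ x ∈ K) ∧ support φ ⊆ U := by
  obtain ⟨h, hh, rfl⟩ := hK
  obtain ⟨g, hg, rfl⟩ := hU.exists_support_eq
  have hpos : ∀ x, 0 < |g x| + |h x| := fun x => by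
    by_contra! hx
    have hgx : g x = 0 := abs_eq_zero.1 (by linarith [abs_nonneg (g x), abs_nonneg (h x)])
    have hhx : h x = 0 := abs_eq_zero.1 (by linarith [abs_nonneg (g x), abs_nonneg (h x)])
    exact hKU (show h x = 0 from hhx) hgx
  refine ⟨fun x => |g x| / (|g x| + |h x|),
    hg.abs.div (hg.abs.add hh.abs) fun x => (hpos x).ne', fun x => ?_, fun x hx => ?_⟩
  · simp [div_eq_one_iff_eq (hpos x).ne']
  · exact (div_ne_zero_iff.1 hx).1 |> abs_ne_zero.1

end FunctionallyClosed

lemma finsum_apply_eq_zero_of_notMem {X I : Type*} {U : I → Set X} {φ : I → X → ℝ}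
    (hφ : ∀ i, support (φ i) ⊆ U i) {x : X} (hx : x ∉ ⋃ i, U i) : ∑ᶠ j, φ j x = 0 :=
  finsum_eq_zero_of_forall_eq_zero fun j =>
    notMem_support.1 fun hxj => hx (mem_iUnion_of_mem j (hφ j hxj))

namespace DiscreteFam

variable {X I J : Type*} [TopologicalSpace X] {U : I → Set X}

lemma comp_injective (hU : DiscreteFam U) {e : J → I} (he : Injective e) :
    DiscreteFam (U ∘ e) := fun x => by
  obtain ⟨V, hVo, hxV, hV⟩ := hU x
  exact ⟨V, hVo, hxV, fun i j hi hj => he (hV _ _ hi hj)⟩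

lemma pairwise_disjoint (hU : DiscreteFam U) : Pairwise (Disjoint on U) := by
  refine fun i j hij => Set.disjoint_left.2 fun x hxi hxj => hij ?_
  obtain ⟨V, -, hxV, hV⟩ := hU x
  exact hV i j ⟨x, hxV, hxi⟩ ⟨x, hxV, hxj⟩

lemma locallyFinite (hU : DiscreteFam U) : LocallyFinite U := fun x => by
  obtain ⟨V, hVo, hxV, hV⟩ := hU x
  refine ⟨V, hVo.mem_nhds hxV, Set.Subsingleton.finite fun i hi j hj => ?_⟩
  exact hV i j (inter_comm _ _ ▸ hi) (inter_comm _ _ ▸ hj)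

variable {φ : I → X → ℝ}

lemma finsum_apply_eq_of_mem (hU : DiscreteFam U) (hφ : ∀ i, support (φ i) ⊆ U i) {i : I}
    {x : X} (hx : x ∈ U i) : ∑ᶠ j, φ j x = φ i x :=
  finsum_eq_single _ i fun j hji =>
    notMem_support.1 fun hxj => hU.pairwise_disjoint hji |>.ne_of_mem (hφ j hxj) hx rfl

lemma continuous_finsum (hU : DiscreteFam U) (hφ : ∀ i, support (φ i) ⊆ U i)
    (hc : ∀ i, Continuous (φ i)) : Continuous fun x => ∑ᶠ i, φ i x :=
  _root_.continuous_finsum hc (hU.locallyFinite.subset hφ)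

lemma funOpen_iUnion (hU : DiscreteFam U) (hUo : ∀ i, FunOpen (U i)) : FunOpen (⋃ i, U i) := by
  choose g hg hgU using fun i => (hUo i).exists_support_eq
  have hsupp : ∀ i, support (fun x => |g i x|) ⊆ U i := fun i x hx => by
    rw [← hgU i]
    exact abs_ne_zero.1 hx
  refine ⟨fun x => ∑ᶠ i, |g i x|, hU.continuous_finsum hsupp fun i => (hg i).abs, ?_⟩
  ext x
  simp only [mem_compl_iff, mem_preimage, mem_singleton_iff]
  by_cases hx : x ∈ ⋃ i, U i
  · obtain ⟨i, hxi⟩ := mem_iUnion.1 hx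
    rw [hU.finsum_apply_eq_of_mem hsupp hxi]
    simpa [← hgU i, hx] using hxi
  · simp [hx, finsum_apply_eq_zero_of_notMem hsupp hx]

lemma funClosed_iUnion {K : I → Set X} (hU : DiscreteFam U) (hUo : ∀ i, FunOpen (U i))
    (hK : ∀ i, FunClosed (K i)) (hKU : ∀ i, K i ⊆ U i) : FunClosed (⋃ i, K i) := by
  choose φ hφ hφK hφU using fun i => (hK i).exists_continuous_eq_one_iff (hUo i) (hKU i)
  refine ⟨fun x => 1 - ∑ᶠ i, φ i x, continuous_const.sub (hU.continuous_finsum hφU hφ), ?_⟩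
  ext x
  simp only [mem_iUnion, mem_preimage, mem_singleton_iff, sub_eq_zero, eq_comm (a := (1 : ℝ))]
  by_cases hx : x ∈ ⋃ i, U i
  · obtain ⟨i, hxi⟩ := mem_iUnion.1 hx
    rw [hU.finsum_apply_eq_of_mem hφU hxi, hφK]
    refine ⟨fun ⟨j, hxj⟩ => ?_, fun h => ⟨i, h⟩⟩
    rwa [← hU.pairwise_disjoint.eq (Set.not_disjoint_iff.2 ⟨x, hKU j hxj, hxi⟩)]
  · rw [finsum_apply_eq_zero_of_notMem hφU hx]
    refine ⟨fun ⟨j, hxj⟩ => absurd (mem_iUnion_of_mem j (hKU j hxj)) hx, fun h => ?_⟩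
    exact absurd h zero_ne_one

lemma biUnion {S : J → Set I} (hU : DiscreteFam U) (hS : Pairwise (Disjoint on S)) :
    DiscreteFam fun j => ⋃ i ∈ S j, U i := fun x => by
  obtain ⟨V, hVo, hxV, hV⟩ := hU x
  refine ⟨V, hVo, hxV, fun j j' hj hj' => ?_⟩
  simp only [inter_iUnion₂, nonempty_iUnion] at hj hj'
  obtain ⟨i, hij, hi⟩ := hj
  obtain ⟨i', hij', hi'⟩ := hj'
  exact hS.eq (Set.not_disjoint_iff.2 ⟨i, hij, hV i i' hi hi' ▸ hij'⟩)

end DiscreteFam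

section FunctionalClasses

variable {X : Type*} [TopologicalSpace X] {α β : Ordinal}

lemma funMul_zero : FunMul X 0 = {F | FunClosed F} := by
  rw [FunMul, FunClassPair, if_pos rfl]

lemma funAdd_zero : FunAdd X 0 = {U | FunOpen U} := by
  rw [FunAdd, FunClassPair, if_pos rfl]

lemma funMul_of_ne_zero (hα : α ≠ 0) :
    FunMul X α = {A | ∃ g : ℕ → Set X, (∀ n, ∃ β < α, g n ∈ FunAdd X β) ∧ A = ⋂ n, g n} := by
  rw [FunMul, FunClassPair, if_neg hα]
  simp only [exists_prop]
  rfl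

lemma funAdd_of_ne_zero (hα : α ≠ 0) :
    FunAdd X α = {A | ∃ g : ℕ → Set X, (∀ n, ∃ β < α, g n ∈ FunMul X β) ∧ A = ⋃ n, g n} := by
  rw [FunAdd, FunClassPair, if_neg hα]
  simp only [exists_prop]
  rfl

lemma FunClosed.mem_funMul {F : Set X} (hF : FunClosed F) : F ∈ FunMul X α := by
  rcases eq_or_ne α 0 with rfl | hα
  · rwa [funMul_zero]
  obtain ⟨W, hW, rfl⟩ := hF.eq_iInter_funOpen
  rw [funMul_of_ne_zero hα]
  exact ⟨W, fun n => ⟨0, pos_iff_ne_zero.2 hα, by rw [funAdd_zero]; exact hW n⟩, rfl⟩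

lemma inter_mem_funMul {A B : Set X} (hA : A ∈ FunMul X α) (hB : B ∈ FunMul X α) :
    A ∩ B ∈ FunMul X α := by
  rcases eq_or_ne α 0 with rfl | hα
  · rw [funMul_zero] at hA hB ⊢
    exact hA.inter hB
  rw [funMul_of_ne_zero hα] at hA hB ⊢
  obtain ⟨g, hg, rfl⟩ := hA
  obtain ⟨h, hh, rfl⟩ := hB
  have hgh : ∀ s, ∃ β < α, Sum.elim g h s ∈ FunAdd X β := Sum.forall.2 ⟨hg, hh⟩
  refine ⟨fun n => Sum.elim g h (Equiv.natSumNatEquivNat.symm n), fun n => hgh _, ?_⟩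
  rw [Equiv.natSumNatEquivNat.symm.surjective.iInter_comp (Sum.elim g h), iInter_sum]
  rfl

lemma funMul_mono (h : β ≤ α) : FunMul X β ⊆ FunMul X α := by
  rcases h.eq_or_lt with rfl | h
  · exact le_rfl
  intro A hA
  have hα : α ≠ 0 := (pos_of_gt h).ne'
  rcases eq_or_ne β 0 with rfl | hβ
  · rw [funMul_zero] at hA
    exact FunClosed.mem_funMul hA
  rw [funMul_of_ne_zero hβ] at hA
  rw [funMul_of_ne_zero hα]
  obtain ⟨g, hg, rfl⟩ := hA
  exact ⟨g, fun n => (hg n).imp fun γ hγ => ⟨hγ.1.trans h, hγ.2⟩, rfl⟩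

lemma funMul_subset_funAdd (h : β < α) : FunMul X β ⊆ FunAdd X α := fun A hA => by
  rw [funAdd_of_ne_zero (pos_of_gt h).ne']
  exact ⟨fun _ => A, fun _ => ⟨β, h, hA⟩, (iUnion_const A).symm⟩

lemma funAmb_of_mem_funMul (h : β < α) {A : Set X} (hA : A ∈ FunMul X β) : FunAmb α A :=
  ⟨funMul_subset_funAdd h hA, funMul_mono h.le hA⟩

end FunctionalClasses

section SFD

variable {X Y : Type*} [TopologicalSpace X] [TopologicalSpace Y]

lemma LebClass.exists_funMul_seq {α : Ordinal} {f : X → Y} (hf : LebClass α f) (hα : α ≠ 0) :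
    ∃ G : Set Y → ℕ → Set X, ∀ V, IsOpen V →
      (∀ j, ∃ β < α, G V j ∈ FunMul X β) ∧ f ⁻¹' V = ⋃ j, G V j := by
  have hG : ∀ V : Set Y, ∃ G : ℕ → Set X, IsOpen V →
      (∀ j, ∃ β < α, G j ∈ FunMul X β) ∧ f ⁻¹' V = ⋃ j, G j := fun V => by
    by_cases hV : IsOpen V
    · have hfV := hf V hV
      rw [funAdd_of_ne_zero hα] at hfV
      obtain ⟨G, hG, hGV⟩ := hfV
      exact ⟨G, fun _ => ⟨hG, hGV⟩⟩
    · exact ⟨fun _ => ∅, fun h => absurd h hV⟩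
  choose G hG using hG
  exact ⟨G, hG⟩

lemma SFDFam.mono {I : Type*} {A B : I → Set X} (hB : SFDFam B) (hAB : ∀ i, A i ⊆ B i) :
    SFDFam A := by
  obtain ⟨U, hU, hUo, hBU⟩ := hB
  exact ⟨U, hU, hUo, fun i => (closure_mono (hAB i)).trans (hBU i)⟩

lemma SFDFam.sfdSet_range {I : Type*} {A : I → Set X} (hA : SFDFam A) : SFDSet (range A) := by
  obtain ⟨U, hU, hUo, hAU⟩ := hA
  choose e he using fun d : range A => d.2
  have he_inj : Injective e := fun d d' h => Subtype.ext (by rw [← he d, ← he d', h])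
  refine ⟨U ∘ e, hU.comp_injective he_inj, fun d => hUo (e d), fun d => ?_⟩
  simpa only [← he d, comp_apply] using hAU (e d)

lemma DiscreteFam.funClosed_biUnion {I : Type*} {U K : I → Set X} (hU : DiscreteFam U)
    (hUo : ∀ i, FunOpen (U i)) (hK : ∀ i, FunClosed (K i)) (hKU : ∀ i, K i ⊆ U i) (s : Set I) :
    FunClosed (⋃ i ∈ s, K i) := by
  rw [biUnion_eq_iUnion]
  exact (hU.comp_injective Subtype.val_injective).funClosed_iUnion (fun i => hUo i)
    (fun i => hK i) fun i => hKU i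

lemma DiscreteFam.sfdFam_biUnion {I J : Type*} {U K : I → Set X} (hU : DiscreteFam U)
    (hUo : ∀ i, FunOpen (U i)) (hK : ∀ i, FunClosed (K i)) (hKU : ∀ i, K i ⊆ U i)
    {S : J → Set I} (hS : Pairwise (Disjoint on S)) : SFDFam fun j => ⋃ i ∈ S j, K i := by
  refine ⟨fun j => ⋃ i ∈ S j, U i, hU.biUnion hS, fun j => ?_, fun j => ?_⟩
  · simp only [biUnion_eq_iUnion]
    exact (hU.comp_injective Subtype.val_injective).funOpen_iUnion fun i => hUo i
  · exact (closure_minimal subset_rfl (hU.funClosed_biUnion hUo hK hKU (S j)).isClosed).trans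
      (biUnion_mono subset_rfl fun i _ => hKU i)

lemma isBaseFor_iff {B : Set (Set X)} {f : X → Y} :
    IsBaseFor B f ↔ ∀ W, IsOpen W → ∀ x, f x ∈ W → ∃ b ∈ B, x ∈ b ∧ b ⊆ f ⁻¹' W := by
  refine ⟨fun h W hW x hx => ?_, fun h W hW => ⟨{b ∈ B | b ⊆ f ⁻¹' W}, sep_subset _ _, ?_⟩⟩
  · obtain ⟨S, hSB, hWS⟩ := h W hW
    obtain ⟨b, hbS, hxb⟩ := (hWS ▸ hx : x ∈ ⋃₀ S)
    exact ⟨b, hSB hbS, hxb, hWS ▸ subset_sUnion_of_mem hbS⟩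
  · refine (sUnion_subset fun b hb => hb.2).antisymm' fun x hx => ?_
    obtain ⟨b, hbB, hxb, hbW⟩ := h W hW x hx
    exact ⟨b, ⟨hbB, hbW⟩, hxb⟩

lemma sigmaSFDAmb_of_denumerable {ι : Type*} [Denumerable ι] {α : Ordinal} {f : X → Y}
    (B : ι → Set (Set X)) (hB : ∀ i, SFDSet (B i)) (hamb : ∀ i, ∀ b ∈ B i, FunAmb α b)
    (hbase : IsBaseFor (⋃ i, B i) f) : SigmaSFDAmb α f := by
  let e := Denumerable.eqv ι
  refine ⟨fun n => B (e.symm n), fun n => hB _, fun n => hamb _, ?_⟩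
  rwa [e.symm.surjective.iUnion_comp B]

end SFD

section Core

variable {X Y : Type*} {ℬ : Set (Set X)}

-- Nonemptiness of the trace makes `V` determined by `b` when `V` ranges over a disjoint collection.
def coreIndices (K : ℬ → Set X) (f : X → Y) (V : Set Y) : Set ℬ :=
  {b | ((b : Set X) ∩ K b).Nonempty ∧ (b : Set X) ∩ K b ⊆ f ⁻¹' V}

def coreUnion (K : ℬ → Set X) (f : X → Y) (V : Set Y) : Set X :=
  ⋃ b ∈ coreIndices K f V, K b

lemma pairwise_disjoint_coreIndices {𝒱 : Set (Set Y)} (h𝒱 : 𝒱.PairwiseDisjoint id)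
    (K : ℬ → Set X) (f : X → Y) : Pairwise (Disjoint on fun V : 𝒱 => coreIndices K f V) := by
  refine fun V V' hVV' => Set.disjoint_left.2 fun b hb hb' => ?_
  obtain ⟨x, hx⟩ := hb.1
  exact Set.disjoint_left.1 (h𝒱 V.2 V'.2 (Subtype.coe_injective.ne hVV')) (hb.2 hx) (hb'.2 hx)

lemma funClosed_coreUnion [TopologicalSpace X] {U K : ℬ → Set X} (hU : DiscreteFam U)
    (hUo : ∀ b, FunOpen (U b)) (hK : ∀ b, FunClosed (K b)) (hKU : ∀ b, K b ⊆ U b) (f : X → Y)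
    (V : Set Y) : FunClosed (coreUnion K f V) :=
  hU.funClosed_biUnion hUo hK hKU _

lemma sfdSet_range_coreUnion_inter [TopologicalSpace X] {U K : ℬ → Set X} (hU : DiscreteFam U)
    (hUo : ∀ b, FunOpen (U b)) (hK : ∀ b, FunClosed (K b)) (hKU : ∀ b, K b ⊆ U b)
    {𝒱 : Set (Set Y)} (h𝒱 : 𝒱.PairwiseDisjoint id) (f : X → Y) (G : Set Y → Set X) :
    SFDSet (range fun V : 𝒱 => coreUnion K f V ∩ G V) :=
  (hU.sfdFam_biUnion hUo hK hKU (pairwise_disjoint_coreIndices h𝒱 K f)).mono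
    (fun _ => inter_subset_left) |>.sfdSet_range

lemma mem_coreUnion {K : ℬ → Set X} {f : X → Y} {V : Set Y} {b : ℬ} {x : X}
    (hxb : x ∈ (b : Set X)) (hxK : x ∈ K b) (hbV : (b : Set X) ⊆ f ⁻¹' V) :
    x ∈ coreUnion K f V :=
  mem_biUnion (x := b) ⟨⟨x, hxb, hxK⟩, inter_subset_left.trans hbV⟩ hxK

end Core

theorem stmt7_general {X Y : Type*} [TopologicalSpace X] [TopologicalSpace Y]
    (α : Ordinal) (h0 : 0 < α) (hY : SigmaDisjointBase Y)
    (f : X → Y) (hf : LebClass α f) (hb : SigmaSFD f) :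
    SigmaSFDAmb α f := by
  obtain ⟨𝒱, h𝒱disj, h𝒱⟩ := hY
  obtain ⟨B, hBsfd, hBbase⟩ := hb
  choose U hU hUo hBU using hBsfd
  choose K hK hUK using fun n (b : B n) => (hUo n b).eq_iUnion_funClosed
  have hKU : ∀ n b k, K n b k ⊆ U n b := fun n b k => (hUK n b).symm ▸ subset_iUnion _ k
  obtain ⟨G, hG⟩ := hf.exists_funMul_seq h0.ne'
  have h𝒱o : ∀ m, ∀ V ∈ 𝒱 m, IsOpen V := fun m V hV => h𝒱.isOpen (mem_iUnion_of_mem m hV)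
  let Φ n k := coreUnion (fun b => K n b k) f
  refine sigmaSFDAmb_of_denumerable
    (fun p : ℕ × ℕ × ℕ × ℕ => range fun V : 𝒱 p.2.2.1 => Φ p.1 p.2.1 V ∩ G V p.2.2.2)
    (fun ⟨n, k, m, j⟩ => sfdSet_range_coreUnion_inter (hU n) (hUo n) (hK n · k) (hKU n · k)
      (h𝒱disj m) f (G · j)) ?_ ?_
  · rintro ⟨n, k, m, j⟩ _ ⟨V, rfl⟩
    obtain ⟨β, hβ, hGV⟩ := (hG V (h𝒱o m V V.2)).1 j
    exact funAmb_of_mem_funMul hβ <| inter_mem_funMul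
      (funClosed_coreUnion (hU n) (hUo n) (hK n · k) (hKU n · k) f V).mem_funMul hGV
  · rw [isBaseFor_iff] at hBbase ⊢
    intro W hW x hxW
    obtain ⟨V, hV, hxV, hVW⟩ := h𝒱.exists_subset_of_mem_open hxW hW
    obtain ⟨m, hVm⟩ := mem_iUnion.1 hV
    have hfV := (hG V (h𝒱o m V hVm)).2
    obtain ⟨b, hb, hxb, hbV⟩ := hBbase V (h𝒱o m V hVm) x hxV
    obtain ⟨n, hbn⟩ := mem_iUnion.1 hb
    obtain ⟨k, hxK⟩ := mem_iUnion.1 (hUK n ⟨b, hbn⟩ ▸ hBU n ⟨b, hbn⟩ (subset_closure hxb))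
    obtain ⟨j, hxG⟩ := mem_iUnion.1 (hfV ▸ hxV : x ∈ ⋃ j, G V j)
    refine ⟨Φ n k V ∩ G V j, mem_iUnion.2 ⟨(n, k, m, j), ⟨V, hVm⟩, rfl⟩,
      ⟨mem_coreUnion (b := ⟨b, hbn⟩) hxb hxK hbV, hxG⟩, ?_⟩
    calc Φ n k V ∩ G V j ⊆ G V j := inter_subset_right
      _ ⊆ f ⁻¹' V := hfV ▸ subset_iUnion _ j
      _ ⊆ f ⁻¹' W := preimage_mono hVW

theorem stmt7 {X Y : Type*} [TopologicalSpace X] [TopologicalSpace Y]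
    (α : Ordinal) (h0 : 0 < α) (hα : α < ω₁) (hY : SigmaDisjointBase Y)
    (f : X → Y) (hf : LebClass α f) (hb : SigmaSFD f) :
    SigmaSFDAmb α f :=
  stmt7_general α h0 hY f hf hb
end

section
/- Let A₁, ..., Aₙ be strongly functionally discrete families of subsets of a topological space X, let A_k = ⋃ A_k (the union of the members of the k-th family), and suppose the family (A_1, ..., A_n) of these unions is itself strongly functionally discrete. Then the combined family ⋃_{k=1}^n A_k (all members of all n families together) is strongly functionally discrete. -/
open Set Topology Ordinal

/-!
Shrink the neighbourhood `U k i` of `closure (A k i)` to `U k i ∩ W k`, where `W k` is the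
neighbourhood of `closure (⋃ i, A k i)`. Near any point, an open set meets at most one `W k`,
and intersecting it with one witness of discreteness for each of the finitely many families
`U k` makes it meet at most one `U k i ∩ W k`.
-/

section

variable {X : Type*} [TopologicalSpace X]

lemma FunOpen.inter {U V : Set X} (hU : FunOpen U) (hV : FunOpen V) : FunOpen (U ∩ V) := by
  obtain ⟨f, hf, hfU⟩ := hU
  obtain ⟨g, hg, hgV⟩ := hV
  refine ⟨f * g, hf.mul hg, ?_⟩
  rw [compl_inter, hfU, hgV]
  ext x
  simp

lemma DiscreteFam.sigma_inter {K : Type*} [Finite K] {I : K → Type*} {W : K → Set X}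
    {U : (k : K) → I k → Set X} (hW : DiscreteFam W) (hU : ∀ k, DiscreteFam (U k)) :
    DiscreteFam (fun p : (k : K) × I k => U p.1 p.2 ∩ W p.1) := by
  intro x
  obtain ⟨V, hVo, hxV, hVW⟩ := hW x
  choose Vk hVko hxVk hVkU using fun k => hU k x
  refine ⟨V ∩ ⋂ k, Vk k, hVo.inter (isOpen_iInter_of_finite hVko),
    ⟨hxV, mem_iInter.2 hxVk⟩, ?_⟩
  rintro ⟨k, i⟩ ⟨l, j⟩ ⟨y, hyV, hyU, hyW⟩ ⟨z, hzV, hzU, hzW⟩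
  obtain rfl : k = l := hVW k l ⟨y, hyV.1, hyW⟩ ⟨z, hzV.1, hzW⟩
  obtain rfl : i = j := hVkU k i j ⟨y, mem_iInter.1 hyV.2 k, hyU⟩ ⟨z, mem_iInter.1 hzV.2 k, hzU⟩
  rfl

end

theorem stmt13 {X : Type*} [TopologicalSpace X] {n : ℕ} {I : Fin n → Type*}
    (A : (k : Fin n) → I k → Set X)
    (hsfd : ∀ k, SFDFam (A k))
    (hU : SFDFam (fun k : Fin n => ⋃ i, A k i)) :
    SFDFam (fun p : (k : Fin n) × I k => A p.1 p.2) := by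
  obtain ⟨W, hWd, hWo, hWA⟩ := hU
  choose U hUd hUo hUA using hsfd
  refine ⟨fun p => U p.1 p.2 ∩ W p.1, hWd.sigma_inter hUd,
    fun p => (hUo p.1 p.2).inter (hWo p.1), fun p => subset_inter (hUA p.1 p.2) ?_⟩
  exact (closure_mono (subset_iUnion _ p.2)).trans (hWA p.1)
end
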